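/- After an incremental edge update on (u,v), for any source s and any edge (a,b): (a,b) ∈ DAG'(s) if and only if at least one of the following holds: (i) (a,b) ∈ DAG(s), (a,b) ≠ (u,v), and flag(s,b) ∈ {UN-changed, NUM-changed}; (ii) (a,b) ∈ DAG(v) and flag(s,b) ∈ {NUM-changed, WT-changed}; (iii) (a,b) = (u,v) and flag(s,v) ∈ {NUM-changed, WT-changed}. -/

import Mathlib

/-!
Write `ψ x = d(s,u) + w'(u,v) + d(v,x)` for the length of a shortest walk `s ⇝ u → v ⇝ x` in
`G'`. A path to `u`, or from `v`, that uses the edge `(u,v)` can be cut at that edge without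
getting longer, so distances to `u` and from `v` do not change and `d'(s,·) = min (d(s,·)) ψ`.
When `d'(s,x) = d(s,x)`, the old shortest paths are exactly the new ones avoiding `(u,v)`, so
`σ_{sx}` grows iff some new shortest path runs through `(u,v)`, i.e. iff `d(s,x) = ψ x < ∞`.
Hence `flag(s,x) ∈ {UN, NUM}` iff `d(s,x) ≤ ψ x`, and `flag(s,x) ∈ {NUM, WT}` iff
`ψ x ≤ d(s,x)` and `ψ x < ∞`. Finally, `DAG'(s)` consists of the edges tight for the potential
`min (d(s,·)) ψ`; an edge other than `(u,v)` is tight for it iff it is tight for whichever of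
`d(s,·)`, `ψ` attains the minimum at its head, and the `ψ`-tight edges are those of `DAG(v)`.
-/

open scoped ENNReal

namespace BC

variable {V : Type*}

/-- `p` is a path from `s` to `t` in the weighted digraph with weight function `w`;
an edge is present iff its weight is not `⊤`. -/
def IsPath (w : V → V → ℝ≥0∞) (s t : V) (p : List V) : Prop :=
  p ≠ [] ∧ p.head? = some s ∧ p.getLast? = some t ∧ p.Chain' (fun a b => w a b ≠ ⊤)

/-- The weight of a path: the sum of the weights of its consecutive edges. -/
noncomputable def pWeight (w : V → V → ℝ≥0∞) (p : List V) : ℝ≥0∞ :=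
  ((p.zip p.tail).map fun e => w e.1 e.2).sum

/-- The shortest-path distance `d(s,t)` (equal to `⊤` if no path exists). -/
noncomputable def dist (w : V → V → ℝ≥0∞) (s t : V) : ℝ≥0∞ :=
  ⨅ p ∈ {p | IsPath w s t p}, pWeight w p

/-- `p` is a shortest path from `s` to `t`. -/
def IsShortest (w : V → V → ℝ≥0∞) (s t : V) (p : List V) : Prop :=
  IsPath w s t p ∧ pWeight w p = dist w s t

/-- `σ_{st}`: the number of shortest paths from `s` to `t`. -/
noncomputable def nsp (w : V → V → ℝ≥0∞) (s t : V) : ℕ :=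
  Set.ncard {p | IsShortest w s t p}

/-- `σ_{st}(x)`: the number of shortest paths from `s` to `t` passing through `x`. -/
noncomputable def nspVia (w : V → V → ℝ≥0∞) (s t x : V) : ℕ :=
  Set.ncard {p | IsShortest w s t p ∧ x ∈ p}

/-- The directed edge `(a,b)` lies on the path `p`. -/
def edgeOn (p : List V) (a b : V) : Prop := (a, b) ∈ p.zip p.tail

/-- The shortest-path DAG rooted at `s`: the edges lying on shortest paths from `s`. -/
def dagSet (w : V → V → ℝ≥0∞) (s : V) : Set (V × V) :=
  {e | w e.1 e.2 ≠ ⊤ ∧ dist w s e.1 ≠ ⊤ ∧ dist w s e.1 + w e.1 e.2 = dist w s e.2}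

/-- flag(s,t) = WT-changed : the distance from `s` to `t` decreased. -/
def WTchanged (w w' : V → V → ℝ≥0∞) (s t : V) : Prop := dist w' s t < dist w s t

/-- flag(s,t) = NUM-changed : same distance, strictly more shortest paths. -/
def NUMchanged (w w' : V → V → ℝ≥0∞) (s t : V) : Prop :=
  dist w' s t = dist w s t ∧ nsp w s t < nsp w' s t

/-- flag(s,t) = UN-changed : same distance, same number of shortest paths. -/
def UNchanged (w w' : V → V → ℝ≥0∞) (s t : V) : Prop :=
  dist w' s t = dist w s t ∧ nsp w' s t = nsp w s t

section Paths

variable {w w' : V → V → ℝ≥0∞} {s t x y : V} {p : List V}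

theorem mem_zip_tail_iff {a b : V} :
    (a, b) ∈ p.zip p.tail ↔ ∃ l₁ l₂, p = l₁ ++ a :: b :: l₂ := by
  induction p with
  | nil => simp
  | cons c p ih =>
    cases p with
    | nil =>
      simp only [List.tail_cons, List.zip_nil_right, List.not_mem_nil, false_iff, not_exists]
      intro l₁ l₂ h
      have := congrArg List.length h
      simp only [List.length_cons, List.length_nil, zero_add, List.length_append] at this
      omega
    | cons d p =>
      simp only [List.tail_cons, List.zip_cons_cons, List.mem_cons, Prod.mk.injEq] at ih ⊢
      rw [ih]
      constructor
      · rintro (⟨rfl, rfl⟩ | ⟨l₁, l₂, h⟩)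
        · exact ⟨[], p, rfl⟩
        · exact ⟨c :: l₁, l₂, by rw [h]; rfl⟩
      · rintro ⟨_ | ⟨e, l₁⟩, l₂, h⟩
        · simp_all
        · simp only [List.cons_append, List.cons.injEq] at h
          exact Or.inr ⟨l₁, l₂, h.2⟩

theorem isChain_iff_forall_mem_zip_tail {R : V → V → Prop} :
    p.IsChain R ↔ ∀ a b, (a, b) ∈ p.zip p.tail → R a b := by
  simp only [List.isChain_iff_forall_rel_of_append_cons_cons, mem_zip_tail_iff]
  grind

@[simp] theorem pWeight_singleton (x : V) : pWeight w [x] = 0 := rfl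

theorem pWeight_cons_cons (a b : V) (l : List V) :
    pWeight w (a :: b :: l) = w a b + pWeight w (b :: l) := by
  simp [pWeight]

theorem pWeight_append_cons (l₁ l₂ : List V) (x : V) :
    pWeight w (l₁ ++ x :: l₂) = pWeight w (l₁ ++ [x]) + pWeight w (x :: l₂) := by
  induction l₁ with
  | nil => simp [pWeight]
  | cons a l ih =>
    cases l with
    | nil => simp [pWeight_cons_cons]
    | cons b l =>
      simp only [List.cons_append, pWeight_cons_cons] at ih ⊢
      rw [ih, add_assoc]

theorem pWeight_mono (h : ∀ a b, (a, b) ∈ p.zip p.tail → w' a b ≤ w a b) :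
    pWeight w' p ≤ pWeight w p :=
  List.sum_le_sum fun e he => h e.1 e.2 he

theorem pWeight_congr (h : ∀ a b, (a, b) ∈ p.zip p.tail → w' a b = w a b) :
    pWeight w' p = pWeight w p :=
  le_antisymm (pWeight_mono fun a b hab => (h a b hab).le)
    (pWeight_mono fun a b hab => (h a b hab).ge)

theorem pWeight_ne_top_of_isChain : ∀ {p : List V},
    p.IsChain (fun a b => w a b ≠ ⊤) → pWeight w p ≠ ⊤
  | [], _ | [_], _ => by simp [pWeight]
  | a :: b :: l, h => by
    rw [List.isChain_cons_cons] at h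
    rw [pWeight_cons_cons]
    exact ENNReal.add_ne_top.mpr ⟨h.1, pWeight_ne_top_of_isChain h.2⟩

theorem IsPath.pWeight_ne_top (hp : IsPath w s t p) : pWeight w p ≠ ⊤ :=
  pWeight_ne_top_of_isChain hp.2.2.2

theorem IsPath.mono (hp : IsPath w s t p) (h : ∀ a b, (a, b) ∈ p.zip p.tail → w' a b ≤ w a b) :
    IsPath w' s t p := by
  refine ⟨hp.1, hp.2.1, hp.2.2.1, isChain_iff_forall_mem_zip_tail.mpr fun a b hab => ?_⟩
  exact ne_top_of_le_ne_top (isChain_iff_forall_mem_zip_tail.mp hp.2.2.2 a b hab) (h a b hab)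

theorem IsPath.exists_eq_append_singleton (hp : IsPath w s t p) : ∃ l, p = l ++ [t] :=
  List.getLast?_eq_some_iff.mp hp.2.2.1

theorem IsPath.exists_eq_cons (hp : IsPath w s t p) : ∃ l, p = s :: l :=
  List.head?_eq_some_iff.mp hp.2.1

theorem isPath_append_cons_iff {l₁ l₂ : List V} :
    IsPath w s t (l₁ ++ x :: l₂) ↔ IsPath w s x (l₁ ++ [x]) ∧ IsPath w x t (x :: l₂) := by
  have hhead : (l₁ ++ x :: l₂).head? = (l₁ ++ [x]).head? := by cases l₁ <;> rfl
  have hlast : (l₁ ++ x :: l₂).getLast? = (x :: l₂).getLast? := by simp [List.getLast?_cons]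
  rw [IsPath, IsPath, IsPath, hhead, hlast, List.Chain', List.Chain', List.Chain', List.isChain_split]
  simp only [ne_eq, List.append_eq_nil_iff, reduceCtorEq, and_false, not_false_eq_true,
    List.getLast?_concat, List.head?_cons, true_and]
  tauto

theorem isPath_cons_cons_iff {a b : V} {l : List V} :
    IsPath w a t (a :: b :: l) ↔ w a b ≠ ⊤ ∧ IsPath w b t (b :: l) := by
  rw [IsPath, IsPath, List.Chain', List.Chain', List.isChain_cons_cons]
  simp only [ne_eq, reduceCtorEq, not_false_eq_true, List.head?_cons, List.getLast?_cons_cons,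
    true_and]
  tauto

theorem isPath_append_cons_cons_iff {l₁ l₂ : List V} :
    IsPath w s t (l₁ ++ x :: y :: l₂) ↔
      IsPath w s x (l₁ ++ [x]) ∧ w x y ≠ ⊤ ∧ IsPath w y t (y :: l₂) := by
  rw [isPath_append_cons_iff, isPath_cons_cons_iff]

theorem pWeight_append_cons_cons (l₁ l₂ : List V) (x y : V) :
    pWeight w (l₁ ++ x :: y :: l₂) = pWeight w (l₁ ++ [x]) + w x y + pWeight w (y :: l₂) := by
  rw [pWeight_append_cons, pWeight_cons_cons, add_assoc]

theorem isPath_singleton (w : V → V → ℝ≥0∞) (x : V) : IsPath w x x [x] :=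
  ⟨List.cons_ne_nil x [], rfl, rfl, List.isChain_singleton x⟩

theorem isPath_pair (h : w x y ≠ ⊤) : IsPath w x y [x, y] :=
  ⟨List.cons_ne_nil x [y], rfl, rfl, List.isChain_pair.mpr h⟩

theorem dist_le_pWeight (hp : IsPath w s t p) : dist w s t ≤ pWeight w p :=
  iInf₂_le p hp

theorem le_dist {c : ℝ≥0∞} (h : ∀ p, IsPath w s t p → c ≤ pWeight w p) : c ≤ dist w s t :=
  le_iInf₂ h

theorem dist_self (w : V → V → ℝ≥0∞) (x : V) : dist w x x = 0 :=
  nonpos_iff_eq_zero.mp (by simpa [pWeight] using dist_le_pWeight (isPath_singleton w x))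

theorem dist_mono (h : ∀ a b, w' a b ≤ w a b) (s t : V) : dist w' s t ≤ dist w s t :=
  le_dist fun _ hp =>
    (dist_le_pWeight (hp.mono fun a b _ => h a b)).trans (pWeight_mono fun a b _ => h a b)

theorem dist_le_weight (w : V → V → ℝ≥0∞) (x y : V) : dist w x y ≤ w x y := by
  by_cases h : w x y = ⊤
  · simp [h]
  · simpa [pWeight] using dist_le_pWeight (isPath_pair h)

theorem dist_triangle (w : V → V → ℝ≥0∞) (s x t : V) : dist w s t ≤ dist w s x + dist w x t := by
  have key : ∀ p, IsPath w s x p → ∀ q, IsPath w x t q →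
      dist w s t ≤ pWeight w p + pWeight w q := by
    intro p hp q hq
    obtain ⟨l₁, rfl⟩ := hp.exists_eq_append_singleton
    obtain ⟨l₂, rfl⟩ := hq.exists_eq_cons
    rw [← pWeight_append_cons]
    exact dist_le_pWeight (isPath_append_cons_iff.mpr ⟨hp, hq⟩)
  calc dist w s t
      ≤ ⨅ q ∈ {q | IsPath w x t q}, ⨅ p ∈ {p | IsPath w s x p}, pWeight w p + pWeight w q :=
        le_iInf₂ fun q hq => le_iInf₂ fun p hp => key p hp q hq
    _ = dist w s x + dist w x t := by simp only [dist, ENNReal.iInf_add, ENNReal.add_iInf]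

theorem dist_le_dist_add_weight (w : V → V → ℝ≥0∞) (s x y : V) :
    dist w s y ≤ dist w s x + w x y :=
  (dist_triangle w s x y).trans (add_le_add le_rfl (dist_le_weight w x y))

theorem notMem_dagSet_of_pos {a b : V} (h : 0 < w a b) : (a, b) ∉ dagSet w b := by
  rintro ⟨-, -, hab⟩
  rw [dist_self] at hab
  exact h.ne' (add_eq_zero.mp hab).2

theorem exists_isPath_of_dist_ne_top (h : dist w s t ≠ ⊤) : ∃ p, IsPath w s t p := by
  by_contra! h₀
  exact h (top_le_iff.mp (le_dist fun p hp => absurd hp (h₀ p)))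

end Paths

section Finite

variable [Fintype V] {w : V → V → ℝ≥0∞} {s t : V}

theorem finite_setOf_isPath_pWeight_le (hpos : ∀ a b, 0 < w a b) {c : ℝ≥0∞} (hc : c ≠ ⊤) :
    {p | IsPath w s t p ∧ pWeight w p ≤ c}.Finite := by
  set ε := Finset.univ.inf fun e : V × V => w e.1 e.2
  have hε : ε ≠ 0 := ((Finset.lt_inf_iff (by simp)).mpr fun e _ => hpos e.1 e.2).ne'
  obtain ⟨N, hN⟩ := ENNReal.exists_nat_mul_gt hε hc
  refine (List.finite_length_le V N).subset fun p hp => ?_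
  have hlen : ((p.zip p.tail).map fun e => w e.1 e.2).length • ε ≤ pWeight w p :=
    List.card_nsmul_le_sum _ _ fun z hz => by
      obtain ⟨e, -, rfl⟩ := List.mem_map.mp hz
      exact Finset.inf_le (Finset.mem_univ e)
  have hN' : (p.zip p.tail).length < N := by
    by_contra! hge
    rw [List.length_map, nsmul_eq_mul] at hlen
    exact (hN.trans_le (mul_le_mul_left (by exact_mod_cast hge) ε)).not_ge (hlen.trans hp.2)
  simp only [List.length_zip, List.length_tail] at hN'
  show p.length ≤ N
  omega

theorem finite_setOf_isShortest (hpos : ∀ a b, 0 < w a b) : {p | IsShortest w s t p}.Finite := by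
  by_cases hd : dist w s t = ⊤
  · convert Set.finite_empty
    exact Set.eq_empty_of_forall_notMem fun p hp => hp.1.pWeight_ne_top (hp.2.trans hd)
  · exact (finite_setOf_isPath_pWeight_le hpos hd).subset fun p hp => ⟨hp.1, hp.2.le⟩

theorem exists_isShortest (hpos : ∀ a b, 0 < w a b) (h : dist w s t ≠ ⊤) :
    ∃ p, IsShortest w s t p := by
  obtain ⟨p₀, hp₀⟩ := exists_isPath_of_dist_ne_top h
  obtain ⟨q, ⟨hq, -⟩, hmin⟩ := Set.exists_min_image _ (pWeight w)
    (finite_setOf_isPath_pWeight_le hpos hp₀.pWeight_ne_top) ⟨p₀, hp₀, le_rfl⟩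
  refine ⟨q, hq, le_antisymm (le_dist fun p hp => ?_) (dist_le_pWeight hq)⟩
  rcases le_total (pWeight w p) (pWeight w p₀) with hle | hle
  · exact hmin p ⟨hp, hle⟩
  · exact (hmin p₀ ⟨hp₀, le_rfl⟩).trans hle

end Finite

theorem min_ne_top_and_add_eq_min_iff {a a' b b' c : ℝ≥0∞} (hb : b ≤ a + c)
    (hb' : b' ≤ a' + c) :
    (min a a' ≠ ⊤ ∧ min a a' + c = min b b') ↔
      ((a ≠ ⊤ ∧ a + c = b) ∧ b ≤ b') ∨ ((a' ≠ ⊤ ∧ a' + c = b') ∧ b' ≤ b) := by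
  have hmin : min b b' ≤ min a a' + c := by
    rw [← min_add_add_right]; exact min_le_min hb hb'
  constructor
  · rintro ⟨hfin, heq⟩
    rcases min_choice a a' with ha | ha <;> rw [ha] at hfin heq
    · have : b = min b b' := le_antisymm (hb.trans heq.le) (min_le_left b b')
      exact Or.inl ⟨⟨hfin, heq.trans this.symm⟩, min_eq_left_iff.mp this.symm⟩
    · have : b' = min b b' := le_antisymm (hb'.trans heq.le) (min_le_right b b')
      exact Or.inr ⟨⟨hfin, heq.trans this.symm⟩, min_eq_right_iff.mp this.symm⟩
  · rintro (⟨⟨hfin, heq⟩, hle⟩ | ⟨⟨hfin, heq⟩, hle⟩)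
    · refine ⟨ne_top_of_le_ne_top hfin (min_le_left a a'), le_antisymm ?_ hmin⟩
      rw [min_eq_left hle, ← heq]
      exact add_le_add_left (min_le_left a a') c
    · refine ⟨ne_top_of_le_ne_top hfin (min_le_right a a'), le_antisymm ?_ hmin⟩
      rw [min_eq_right hle, ← heq]
      exact add_le_add_left (min_le_right a a') c

theorem add_ne_top_and_add_add_eq_iff {d x y c : ℝ≥0∞} (hc : c ≠ ⊤) :
    (d + x ≠ ⊤ ∧ d + x + c = d + y) ↔ (x ≠ ⊤ ∧ x + c = y) ∧ d + y ≠ ⊤ := by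
  constructor
  · rintro ⟨hfin, heq⟩
    obtain ⟨hd, hx⟩ := ENNReal.add_ne_top.mp hfin
    rw [add_assoc, ENNReal.add_right_inj hd] at heq
    exact ⟨⟨hx, heq⟩, heq ▸ ENNReal.add_ne_top.mpr ⟨hd, ENNReal.add_ne_top.mpr ⟨hx, hc⟩⟩⟩
  · rintro ⟨⟨-, rfl⟩, hfin⟩
    rw [← add_assoc] at hfin
    exact ⟨(ENNReal.add_ne_top.mp hfin).1, (add_assoc d x c)⟩

noncomputable def distThrough (w : V → V → ℝ≥0∞) (s u v : V) (c : ℝ≥0∞) (x : V) : ℝ≥0∞ :=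
  dist w s u + c + dist w v x

theorem distThrough_le_add_weight (w : V → V → ℝ≥0∞) (s u v : V) (c : ℝ≥0∞) (x y : V) :
    distThrough w s u v c y ≤ distThrough w s u v c x + w x y := by
  simp only [distThrough, add_assoc]
  exact add_le_add_right (add_le_add_right (dist_le_dist_add_weight w v x y) _) _

structure IsEdgeDecrease (w w' : V → V → ℝ≥0∞) (u v : V) : Prop where
  lt : w' u v < w u v
  eq_of_ne : ∀ a b, (a, b) ≠ (u, v) → w' a b = w a b

namespace IsEdgeDecrease

variable {w w' : V → V → ℝ≥0∞} {u v s t x : V} {q : List V}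

theorem le (h : IsEdgeDecrease w w' u v) (a b : V) : w' a b ≤ w a b := by
  by_cases hab : (a, b) = (u, v)
  · obtain ⟨rfl, rfl⟩ := Prod.mk.inj hab
    exact h.lt.le
  · exact (h.eq_of_ne a b hab).le

theorem pWeight_le (h : IsEdgeDecrease w w' u v) (p : List V) : pWeight w' p ≤ pWeight w p :=
  pWeight_mono fun a b _ => h.le a b

theorem isPath (h : IsEdgeDecrease w w' u v) {p : List V} (hp : IsPath w s t p) :
    IsPath w' s t p :=
  hp.mono fun a b _ => h.le a b

theorem pWeight_eq_of_notMem (h : IsEdgeDecrease w w' u v) (hm : (u, v) ∉ q.zip q.tail) :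
    pWeight w' q = pWeight w q :=
  pWeight_congr fun a b hab => h.eq_of_ne a b (ne_of_mem_of_not_mem hab hm)

theorem isPath_of_notMem (h : IsEdgeDecrease w w' u v) (hq : IsPath w' s t q)
    (hm : (u, v) ∉ q.zip q.tail) : IsPath w s t q :=
  hq.mono fun a b hab => (h.eq_of_ne a b (ne_of_mem_of_not_mem hab hm)).ge

theorem dist_le_pWeight_of_notMem (h : IsEdgeDecrease w w' u v) (hq : IsPath w' s t q)
    (hm : (u, v) ∉ q.zip q.tail) : dist w s t ≤ pWeight w' q := by
  rw [h.pWeight_eq_of_notMem hm]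
  exact dist_le_pWeight (h.isPath_of_notMem hq hm)

theorem pWeight_lt_of_mem (h : IsEdgeDecrease w w' u v) (hq : pWeight w' q ≠ ⊤)
    (hm : (u, v) ∈ q.zip q.tail) : pWeight w' q < pWeight w q := by
  obtain ⟨l₁, l₂, rfl⟩ := mem_zip_tail_iff.mp hm
  rw [pWeight_append_cons_cons] at hq ⊢
  rw [pWeight_append_cons_cons]
  obtain ⟨⟨hpre, -⟩, hsuf⟩ := ENNReal.add_ne_top.mp hq |>.imp_left ENNReal.add_ne_top.mp
  exact ENNReal.add_lt_add_of_lt_of_le hsuf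
    (ENNReal.add_lt_add_of_le_of_lt hpre (h.pWeight_le _) h.lt) (h.pWeight_le _)

theorem dist_to_tail_le (h : IsEdgeDecrease w w' u v) {q : List V} (hq : IsPath w' s u q) :
    dist w s u ≤ pWeight w' q := by
  by_cases hm : (u, v) ∈ q.zip q.tail
  · obtain ⟨l₁, l₂, rfl⟩ := mem_zip_tail_iff.mp hm
    calc dist w s u ≤ pWeight w' (l₁ ++ [u]) :=
          dist_to_tail_le h (isPath_append_cons_cons_iff.mp hq).1
      _ ≤ pWeight w' (l₁ ++ u :: v :: l₂) := by
          rw [pWeight_append_cons_cons, add_assoc]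
          exact le_self_add
  · exact h.dist_le_pWeight_of_notMem hq hm
termination_by q.length
decreasing_by subst_vars; simp

theorem dist_from_head_le (h : IsEdgeDecrease w w' u v) {q : List V} (hq : IsPath w' v t q) :
    dist w v t ≤ pWeight w' q := by
  by_cases hm : (u, v) ∈ q.zip q.tail
  · obtain ⟨l₁, l₂, rfl⟩ := mem_zip_tail_iff.mp hm
    calc dist w v t ≤ pWeight w' (v :: l₂) :=
          dist_from_head_le h (isPath_append_cons_cons_iff.mp hq).2.2
      _ ≤ pWeight w' (l₁ ++ u :: v :: l₂) := by
          rw [pWeight_append_cons_cons]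
          exact le_add_self
  · exact h.dist_le_pWeight_of_notMem hq hm
termination_by q.length
decreasing_by subst_vars; simp; omega

theorem dist_to_tail_eq (h : IsEdgeDecrease w w' u v) (s : V) : dist w' s u = dist w s u :=
  le_antisymm (dist_mono h.le s u) (le_dist fun _ hq => h.dist_to_tail_le hq)

theorem distThrough_le_pWeight (h : IsEdgeDecrease w w' u v) (hq : IsPath w' s x q)
    (hm : (u, v) ∈ q.zip q.tail) : distThrough w s u v (w' u v) x ≤ pWeight w' q := by
  obtain ⟨l₁, l₂, rfl⟩ := mem_zip_tail_iff.mp hm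
  obtain ⟨hpre, -, hsuf⟩ := isPath_append_cons_cons_iff.mp hq
  rw [pWeight_append_cons_cons]
  exact add_le_add (add_le_add_left (h.dist_to_tail_le hpre) _) (h.dist_from_head_le hsuf)

theorem dist_le_distThrough (h : IsEdgeDecrease w w' u v) (s x : V) :
    dist w' s x ≤ distThrough w s u v (w' u v) x :=
  calc dist w' s x ≤ dist w' s u + dist w' u v + dist w' v x :=
        (dist_triangle w' s v x).trans (add_le_add_left (dist_triangle w' s u v) _)
    _ ≤ distThrough w s u v (w' u v) x :=
        add_le_add (add_le_add (dist_mono h.le s u) (dist_le_weight w' u v)) (dist_mono h.le v x)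

theorem dist_eq_min (h : IsEdgeDecrease w w' u v) (s x : V) :
    dist w' s x = min (dist w s x) (distThrough w s u v (w' u v) x) := by
  refine le_antisymm (le_min (dist_mono h.le s x) (h.dist_le_distThrough s x))
    (le_dist fun q hq => ?_)
  by_cases hm : (u, v) ∈ q.zip q.tail
  · exact min_le_of_right_le (h.distThrough_le_pWeight hq hm)
  · exact min_le_of_left_le (h.dist_le_pWeight_of_notMem hq hm)

theorem isShortest_of_isShortest (h : IsEdgeDecrease w w' u v) (hd : dist w' s x = dist w s x)
    {p : List V} (hp : IsShortest w s x p) : IsShortest w' s x p := by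
  refine ⟨h.isPath hp.1, le_antisymm ?_ (dist_le_pWeight (h.isPath hp.1))⟩
  rw [hd, ← hp.2]
  exact h.pWeight_le p

theorem isShortest_iff_notMem (h : IsEdgeDecrease w w' u v) (hd : dist w' s x = dist w s x)
    (hq : IsShortest w' s x q) :
    IsShortest w s x q ↔ (u, v) ∉ q.zip q.tail := by
  refine ⟨fun hq' hm => ?_, fun hm => ?_⟩
  · have := h.pWeight_lt_of_mem hq.1.pWeight_ne_top hm
    rw [hq.2, hq'.2, hd] at this
    exact this.false
  · exact ⟨h.isPath_of_notMem hq.1 hm, by rw [← h.pWeight_eq_of_notMem hm, hq.2, hd]⟩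

variable [Fintype V]

theorem nsp_le (hpos' : ∀ a b, 0 < w' a b) (h : IsEdgeDecrease w w' u v)
    (hd : dist w' s x = dist w s x) : nsp w s x ≤ nsp w' s x :=
  Set.ncard_le_ncard (fun _ => h.isShortest_of_isShortest hd) (finite_setOf_isShortest hpos')

theorem nsp_lt_iff (hpos' : ∀ a b, 0 < w' a b) (h : IsEdgeDecrease w w' u v)
    (hd : dist w' s x = dist w s x) :
    nsp w s x < nsp w' s x ↔ ∃ q, IsShortest w' s x q ∧ (u, v) ∈ q.zip q.tail := by
  have hsub : {p | IsShortest w s x p} ⊆ {p | IsShortest w' s x p} :=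
    fun _ => h.isShortest_of_isShortest hd
  constructor
  · intro hlt
    by_contra! hall
    refine hlt.ne (congrArg Set.ncard (hsub.antisymm fun q hq => ?_))
    exact (h.isShortest_iff_notMem hd hq).mpr (hall q hq)
  · rintro ⟨q, hq, hm⟩
    refine Set.ncard_lt_ncard ⟨hsub, fun hq' => ?_⟩ (finite_setOf_isShortest hpos')
    exact (h.isShortest_iff_notMem hd hq).mp (hq' hq) hm

theorem exists_isShortest_mem_iff (hpos : ∀ a b, 0 < w a b) (h : IsEdgeDecrease w w' u v) :
    (∃ q, IsShortest w' s x q ∧ (u, v) ∈ q.zip q.tail) ↔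
      dist w' s x = distThrough w s u v (w' u v) x ∧ distThrough w s u v (w' u v) x ≠ ⊤ := by
  constructor
  · rintro ⟨q, hq, hm⟩
    have hle := h.distThrough_le_pWeight hq.1 hm
    rw [hq.2] at hle
    exact ⟨le_antisymm (h.dist_le_distThrough s x) hle,
      ne_top_of_le_ne_top (hq.2 ▸ hq.1.pWeight_ne_top) hle⟩
  · rintro ⟨hd, hfin⟩
    obtain ⟨⟨hsu, -⟩, hvx⟩ := ENNReal.add_ne_top.mp hfin |>.imp_left ENNReal.add_ne_top.mp
    obtain ⟨p₁, hp₁, hw₁⟩ := exists_isShortest hpos hsu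
    obtain ⟨p₂, hp₂, hw₂⟩ := exists_isShortest hpos hvx
    obtain ⟨l₁, rfl⟩ := hp₁.exists_eq_append_singleton
    obtain ⟨l₂, rfl⟩ := hp₂.exists_eq_cons
    have hq : IsPath w' s x (l₁ ++ u :: v :: l₂) :=
      isPath_append_cons_cons_iff.mpr ⟨h.isPath hp₁, h.lt.ne_top, h.isPath hp₂⟩
    refine ⟨_, ⟨hq, le_antisymm ?_ (dist_le_pWeight hq)⟩, mem_zip_tail_iff.mpr ⟨l₁, l₂, rfl⟩⟩
    rw [hd, distThrough, ← hw₁, ← hw₂, pWeight_append_cons_cons]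
    exact add_le_add (add_le_add_left (h.pWeight_le _) _) (h.pWeight_le _)

theorem unChanged_or_numChanged_iff (hpos' : ∀ a b, 0 < w' a b) (h : IsEdgeDecrease w w' u v) :
    UNchanged w w' s x ∨ NUMchanged w w' s x ↔ dist w s x ≤ distThrough w s u v (w' u v) x := by
  rw [← min_eq_left_iff, ← h.dist_eq_min]
  constructor
  · rintro (⟨hd, -⟩ | ⟨hd, -⟩) <;> exact hd
  · intro hd
    rcases (h.nsp_le hpos' hd).eq_or_lt with heq | hlt
    exacts [Or.inl ⟨hd, heq.symm⟩, Or.inr ⟨hd, hlt⟩]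

theorem numChanged_or_wtChanged_iff (hpos : ∀ a b, 0 < w a b) (hpos' : ∀ a b, 0 < w' a b)
    (h : IsEdgeDecrease w w' u v) :
    NUMchanged w w' s x ∨ WTchanged w w' s x ↔
      distThrough w s u v (w' u v) x ≤ dist w s x ∧ distThrough w s u v (w' u v) x ≠ ⊤ := by
  have hmin := h.dist_eq_min s x
  rcases lt_or_ge (distThrough w s u v (w' u v) x) (dist w s x) with hlt | hge
  · have hwt : WTchanged w w' s x := by rw [WTchanged, hmin, min_eq_right hlt.le]; exact hlt
    exact iff_of_true (Or.inr hwt) ⟨hlt.le, hlt.ne_top⟩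
  · have hd : dist w' s x = dist w s x := by rw [hmin, min_eq_left hge]
    rw [NUMchanged, WTchanged, h.nsp_lt_iff hpos' hd, h.exists_isShortest_mem_iff hpos, hd]
    simp only [lt_self_iff_false, or_false, true_and]
    exact and_congr_left fun _ => ⟨fun heq => heq.ge, le_antisymm hge⟩

theorem mem_dagSet_iff_of_ne (hpos : ∀ a b, 0 < w a b) (hpos' : ∀ a b, 0 < w' a b)
    (h : IsEdgeDecrease w w' u v) {a b : V} (hab : (a, b) ≠ (u, v)) :
    (a, b) ∈ dagSet w' s ↔
      ((a, b) ∈ dagSet w s ∧ (UNchanged w w' s b ∨ NUMchanged w w' s b)) ∨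
      ((a, b) ∈ dagSet w v ∧ (NUMchanged w w' s b ∨ WTchanged w w' s b)) := by
  rw [h.unChanged_or_numChanged_iff hpos', h.numChanged_or_wtChanged_iff hpos hpos']
  simp only [dagSet, Set.mem_ofPred_eq, h.eq_of_ne a b hab, h.dist_eq_min]
  by_cases hc : w a b = ⊤
  · simp [hc]
  rw [min_ne_top_and_add_eq_min_iff (dist_le_dist_add_weight w s a b)
    (distThrough_le_add_weight w s u v _ a b)]
  rw [distThrough, distThrough, add_ne_top_and_add_add_eq_iff hc]
  tauto

theorem mem_dagSet_iff_self (hpos : ∀ a b, 0 < w a b) (hpos' : ∀ a b, 0 < w' a b)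
    (h : IsEdgeDecrease w w' u v) :
    (u, v) ∈ dagSet w' s ↔ NUMchanged w w' s v ∨ WTchanged w w' s v := by
  rw [h.numChanged_or_wtChanged_iff hpos hpos']
  simp only [dagSet, Set.mem_ofPred_eq]
  rw [h.dist_to_tail_eq, h.dist_eq_min, distThrough, dist_self, add_zero]
  rw [eq_comm, min_eq_right_iff, ENNReal.add_ne_top]
  have := h.lt.ne_top
  tauto

end IsEdgeDecrease

/-- Lemma 3: after an incremental edge update on `(u,v)`,
`(a,b) ∈ DAG'(s)` iff one of:
(i) `(a,b) ∈ DAG(s)`, `(a,b) ≠ (u,v)`, and flag(s,b) ∈ {UN-changed, NUM-changed};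
(ii) `(a,b) ∈ DAG(v)` and flag(s,b) ∈ {NUM-changed, WT-changed};
(iii) `(a,b) = (u,v)` and flag(s,v) ∈ {NUM-changed, WT-changed}. -/
theorem update_dag_correct [Fintype V] (w w' : V → V → ℝ≥0∞) (u v : V)
    (hpos : ∀ a b, 0 < w a b) (hpos' : ∀ a b, 0 < w' a b)
    (hdec : w' u v < w u v)
    (hsame : ∀ a b : V, (a, b) ≠ (u, v) → w' a b = w a b) (s a b : V) :
    (a, b) ∈ dagSet w' s ↔
      ((a, b) ∈ dagSet w s ∧ (a, b) ≠ (u, v) ∧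
        (UNchanged w w' s b ∨ NUMchanged w w' s b)) ∨
      ((a, b) ∈ dagSet w v ∧ (NUMchanged w w' s b ∨ WTchanged w w' s b)) ∨
      ((a, b) = (u, v) ∧ (NUMchanged w w' s v ∨ WTchanged w w' s v)) := by
  have h : IsEdgeDecrease w w' u v := ⟨hdec, hsame⟩
  by_cases hab : (a, b) = (u, v)
  · obtain ⟨rfl, rfl⟩ := Prod.mk.inj hab
    simp [h.mem_dagSet_iff_self hpos hpos', notMem_dagSet_of_pos (hpos a b)]
  · rw [h.mem_dagSet_iff_of_ne hpos hpos' hab]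
    tauto

end BC
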